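/- Suppose C is both left primary decomposable and right primary decomposable. Then for every irreducible λ of R the natural map C_λ/Δ → C/C^λ is an isomorphism; concretely: (a) every c ∈ C_λ ∩ C^λ lies in Δ, and (b) for every c ∈ C there exists d ∈ C_λ with c − d ∈ C^λ. -/

import Mathlib

open Classical in
/-- `S(λ)`: `λ` itself if `λ` is an associate of its involutive image `λ*`,
and `λ · λ*` otherwise. -/
noncomputable def Sdual {R : Type*} [CommRing R] (σ : R →+* R) (l : R) : R :=
  if Associated l (σ l) then l else l * σ l

/-- `λ` and `μ` are `*`-associates: `λ` is an associate of `μ` or of `μ* = σ μ`. -/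
def StarAssoc {R : Type*} [CommRing R] (σ : R →+* R) (l m : R) : Prop :=
  Associated l m ∨ Associated l (σ m)

/-- The subset `Δ ⊆ C` of classes of elements whose `χ`-value is a unit. -/
def DeltaSet {K C R : Type*} [AddCommMonoid K] [AddCommGroup C] [CommRing R]
    (π : K →+ C) (χ : K → R) : Set C :=
  {c | ∃ k, π k = c ∧ IsUnit (χ k)}

/-- The `λ`-primary part `C_λ ⊆ C`: classes of elements whose `χ`-value is an
associate of a power of `S(λ)`. -/
def Cprim {K C R : Type*} [AddCommMonoid K] [AddCommGroup C] [CommRing R]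
    (σ : R →+* R) (π : K →+ C) (χ : K → R) (l : R) : Set C :=
  {c | ∃ k, π k = c ∧ ∃ n : ℕ, Associated (χ k) (Sdual σ l ^ n)}

/-- The coprimary part `C^λ ⊆ C`: classes of elements whose `χ`-value is not
divisible by `λ`. -/
def Cco {K C R : Type*} [AddCommMonoid K] [AddCommGroup C] [CommRing R]
    (π : K →+ C) (χ : K → R) (l : R) : Set C :=
  {c | ∃ k, π k = c ∧ ¬ l ∣ χ k}

/-- Left primary decomposability of a subgroup with carrier `S` of an abelian group `G`,
with respect to a designated subset `D` ("`Δ`") and primary parts `P λ`: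
every element of `S` is `D` plus a finite sum of primary elements, and a sum of
primary elements along pairwise non-`*`-associate irreducibles lying in `D` has all
summands in `D`. -/
def LeftPD {R G : Type*} [CommRing R] [AddCommGroup G] (σ : R →+* R)
    (S D : Set G) (P : R → Set G) : Prop :=
  (∀ g ∈ S, ∃ d ∈ D, ∃ n : ℕ, ∃ lam : Fin n → R, ∃ cs : Fin n → G,
    (∀ i, Irreducible (lam i)) ∧ (∀ i, cs i ∈ P (lam i)) ∧ g = d + ∑ i, cs i) ∧
  (∀ (n : ℕ) (lam : Fin n → R) (cs : Fin n → G),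
    (∀ i, Irreducible (lam i)) →
    (∀ i j, i ≠ j → ¬ StarAssoc σ (lam i) (lam j)) →
    (∀ i, cs i ∈ P (lam i)) →
    (∑ i, cs i) ∈ D → ∀ i, cs i ∈ D)

/-- Right primary decomposability of a subgroup with carrier `S` of an abelian group `G`,
with respect to a designated subset `D` ("`Δ`") and coprimary parts `Q λ`:
an element of `S` lying in every `Q λ` lies in `D`, and for every `g ∈ S` and
irreducible `λ` there is `d ∈ S` with `g - d ∈ Q λ` and `d ∈ Q μ` for every
irreducible `μ` not `*`-associate to `λ`. -/
def RightPD {R G : Type*} [CommRing R] [AddCommGroup G] (σ : R →+* R)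
    (S D : Set G) (Q : R → Set G) : Prop :=
  (∀ g ∈ S, (∀ l : R, Irreducible l → g ∈ Q l) → g ∈ D) ∧
  (∀ g ∈ S, ∀ l : R, Irreducible l → ∃ d ∈ S, g - d ∈ Q l ∧
    ∀ μ : R, Irreducible μ → ¬ StarAssoc σ l μ → d ∈ Q μ)


/-!
For (a): an element of `C_λ` is coprime to every irreducible that is not `*`-associate to `λ`,
since the only prime factors of `S(λ)^n` are `λ` and `λ*`; and since every `Δ_k` is
`*`-stable up to units, lying in `C^λ` means lying in `C^μ` for all `*`-associates `μ` of `λ`.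
So an element of `C_λ ∩ C^λ` lies in every `C^μ`, hence in `Δ` by right decomposability.

For (b): write `c = d + ∑ cᵢ` with `cᵢ ∈ C_{λᵢ}` by left decomposability and keep as `d`
the summands whose `λᵢ` is `*`-associate to `λ`; all other summands, and `d`, lie in the
additively closed set `C^λ`.
-/

section Involution

variable {R : Type*} [CommRing R] {σ : R →+* R}

lemma irreducible_map_of_involutive (hσ : Function.Involutive σ) {a : R} (ha : Irreducible a) :
    Irreducible (σ a) :=
  (MulEquiv.irreducible_iff (RingEquiv.ofRingHom σ σ (RingHom.ext hσ) (RingHom.ext hσ))).mpr ha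

lemma StarAssoc.symm (hσ : Function.Involutive σ) {m l : R} (h : StarAssoc σ m l) :
    StarAssoc σ l m := by
  rcases h with h | h
  · exact .inl h.symm
  · have h' := h.symm.map σ
    rw [hσ l] at h'
    exact .inr h'

lemma sdual_map_associated (hσ : Function.Involutive σ) (l : R) :
    Associated (Sdual σ (σ l)) (Sdual σ l) := by
  unfold Sdual
  rw [hσ l]
  by_cases hl : Associated l (σ l)
  · rw [if_pos hl, if_pos hl.symm]
    exact hl.symm
  · rw [if_neg hl, if_neg (mt Associated.symm hl)]
    exact .of_eq (mul_comm _ _)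

lemma sdual_associated_of_associated {m l : R} (h : Associated m l) :
    Associated (Sdual σ m) (Sdual σ l) := by
  unfold Sdual
  by_cases hl : Associated l (σ l)
  · rw [if_pos hl, if_pos (h.trans (hl.trans (h.map σ).symm))]
    exact h
  · rw [if_neg hl, if_neg (fun hm => hl (h.symm.trans (hm.trans (h.map σ))))]
    exact h.mul_mul (h.map σ)

lemma sdual_associated_of_starAssoc (hσ : Function.Involutive σ) {m l : R}
    (h : StarAssoc σ m l) : Associated (Sdual σ m) (Sdual σ l) := by
  rcases h with h | h
  · exact sdual_associated_of_associated h
  · exact (sdual_associated_of_associated h).trans (sdual_map_associated hσ l)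

lemma starAssoc_of_dvd_sdual_pow [IsDomain R] (hσ : Function.Involutive σ) {p m : R}
    (hp : Prime p) (hm : Irreducible m) {n : ℕ} (h : p ∣ Sdual σ m ^ n) :
    StarAssoc σ p m := by
  have hpS : p ∣ Sdual σ m := hp.dvd_of_dvd_pow h
  unfold Sdual at hpS
  split_ifs at hpS
  · exact .inl (hp.irreducible.associated_of_dvd hm hpS)
  · exact (hp.dvd_mul.mp hpS).imp (hp.irreducible.associated_of_dvd hm)
      (hp.irreducible.associated_of_dvd (irreducible_map_of_involutive hσ hm))

end Involution

section PrimaryParts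

variable {K C R : Type*} [AddCommMonoid K] [AddCommGroup C] [CommRing R]
  {σ : R →+* R} {π : K →+ C} {χ : K → R}

lemma isUnit_chi_zero (hD2 : ∀ k k', Associated (χ (k + k')) (χ k * χ k')) {k : K}
    (hk : IsUnit (χ k)) : IsUnit (χ 0) :=
  isUnit_of_mul_isUnit_right ((add_zero k ▸ hD2 k 0).isUnit hk)

lemma deltaSet_subset_cco {l : R} (hl : ¬IsUnit l) : DeltaSet π χ ⊆ Cco π χ l :=
  fun _ ⟨k, hk, hu⟩ => ⟨k, hk, fun hd => hl (isUnit_of_dvd_unit hd hu)⟩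

lemma add_mem_cco (hD2 : ∀ k k', Associated (χ (k + k')) (χ k * χ k')) {l : R} (hl : Prime l)
    {c c' : C} (hc : c ∈ Cco π χ l) (hc' : c' ∈ Cco π χ l) : c + c' ∈ Cco π χ l := by
  obtain ⟨k, rfl, hk⟩ := hc
  obtain ⟨k', rfl, hk'⟩ := hc'
  refine ⟨k + k', map_add π k k', fun hd => ?_⟩
  rcases hl.dvd_mul.mp (hd.trans (hD2 k k').dvd) with h | h
  exacts [hk h, hk' h]

lemma sum_mem_cco (hD2 : ∀ k k', Associated (χ (k + k')) (χ k * χ k')) (h0 : IsUnit (χ 0))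
    {l : R} (hl : Prime l) {ι : Type*} {s : Finset ι} {f : ι → C}
    (hf : ∀ i ∈ s, f i ∈ Cco π χ l) : ∑ i ∈ s, f i ∈ Cco π χ l :=
  Finset.sum_induction f (· ∈ Cco π χ l) (fun _ _ => add_mem_cco hD2 hl)
    (deltaSet_subset_cco hl.not_isUnit ⟨0, map_zero π, h0⟩) hf

lemma sum_mem_cprim (hD2 : ∀ k k', Associated (χ (k + k')) (χ k * χ k')) (h0 : IsUnit (χ 0))
    {l : R} {ι : Type*} {s : Finset ι} {f : ι → C}
    (hf : ∀ i ∈ s, f i ∈ Cprim σ π χ l) : ∑ i ∈ s, f i ∈ Cprim σ π χ l := by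
  refine Finset.sum_induction f (· ∈ Cprim σ π χ l) ?_
    ⟨0, map_zero π, 0, by simpa using h0⟩ hf
  rintro _ _ ⟨k, rfl, n, hk⟩ ⟨k', rfl, n', hk'⟩
  refine ⟨k + k', map_add π k k', n + n', (hD2 k k').trans ?_⟩
  rw [pow_add]
  exact hk.mul_mul hk'

lemma cprim_subset_cprim_of_starAssoc (hσ : Function.Involutive σ) {m l : R}
    (h : StarAssoc σ m l) : Cprim σ π χ m ⊆ Cprim σ π χ l :=
  fun _ ⟨k, hk, n, hn⟩ => ⟨k, hk, n, hn.trans (sdual_associated_of_starAssoc hσ h).pow_pow⟩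

lemma cco_subset_cco_of_starAssoc (hσ : Function.Involutive σ)
    (hD1 : ∀ k, Associated (σ (χ k)) (χ k)) {μ l : R} (h : StarAssoc σ μ l) :
    Cco π χ l ⊆ Cco π χ μ := by
  rintro _ ⟨k, hk, hlk⟩
  refine ⟨k, hk, fun hμk => hlk ?_⟩
  rcases h with h | h
  · exact h.symm.dvd.trans hμk
  · exact (hσ l ▸ map_dvd σ (h.symm.dvd.trans hμk)).trans (hD1 k).dvd

lemma cprim_subset_cco_of_not_starAssoc [IsDomain R] (hσ : Function.Involutive σ) {μ l : R}
    (hμ : Prime μ) (hl : Irreducible l) (h : ¬StarAssoc σ μ l) :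
    Cprim σ π χ l ⊆ Cco π χ μ :=
  fun _ ⟨k, hk, _, hn⟩ =>
    ⟨k, hk, fun hd => h (starAssoc_of_dvd_sdual_pow hσ hμ hl (hd.trans hn.dvd))⟩

end PrimaryParts

section Decomposition

variable {K C R : Type*} [AddCommMonoid K] [AddCommGroup C]
  [CommRing R] [IsDomain R] [UniqueFactorizationMonoid R]
  {σ : R →+* R} {π : K →+ C} {χ : K → R}

lemma mem_deltaSet_of_mem_cprim_inter_cco (hσ : Function.Involutive σ)
    (hD1 : ∀ k, Associated (σ (χ k)) (χ k))
    (hR : RightPD σ (Set.univ : Set C) (DeltaSet π χ) (Cco π χ))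
    {l : R} (hl : Irreducible l) {c : C} (hc : c ∈ Cprim σ π χ l ∩ Cco π χ l) :
    c ∈ DeltaSet π χ := by
  refine hR.1 c trivial fun μ hμ => ?_
  by_cases h : StarAssoc σ μ l
  · exact cco_subset_cco_of_starAssoc hσ hD1 h hc.2
  · exact cprim_subset_cco_of_not_starAssoc hσ hμ.prime hl h hc.1

lemma exists_mem_cprim_sub_mem_cco (hσ : Function.Involutive σ)
    (hD2 : ∀ k k', Associated (χ (k + k')) (χ k * χ k'))
    (hL : LeftPD σ (Set.univ : Set C) (DeltaSet π χ) (Cprim σ π χ))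
    {l : R} (hl : Irreducible l) (c : C) : ∃ d ∈ Cprim σ π χ l, c - d ∈ Cco π χ l := by
  classical
  obtain ⟨d₀, hd₀, n, lam, cs, hirr, hcs, rfl⟩ := hL.1 c trivial
  have h0 : IsUnit (χ 0) := by
    obtain ⟨k, -, hk⟩ := hd₀
    exact isUnit_chi_zero hD2 hk
  let near : Finset (Fin n) := {i | StarAssoc σ (lam i) l}
  refine ⟨∑ i ∈ near, cs i, sum_mem_cprim hD2 h0 fun i hi => ?_, ?_⟩
  · exact cprim_subset_cprim_of_starAssoc hσ (Finset.mem_filter.mp hi).2 (hcs i)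
  · rw [← Finset.sum_filter_add_sum_filter_not Finset.univ (fun i => StarAssoc σ (lam i) l),
      add_sub_assoc, add_sub_cancel_left]
    refine add_mem_cco hD2 hl.prime (deltaSet_subset_cco hl.not_isUnit hd₀)
      (sum_mem_cco hD2 h0 hl.prime fun i hi => ?_)
    have hfar : ¬StarAssoc σ (lam i) l := (Finset.mem_filter.mp hi).2
    exact cprim_subset_cco_of_not_starAssoc hσ hl.prime (hirr i) (mt (StarAssoc.symm hσ) hfar)
      (hcs i)

end Decomposition

theorem statement8_general
    {K C R : Type*} [AddCommMonoid K] [AddCommGroup C]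
    [CommRing R] [IsDomain R] [UniqueFactorizationMonoid R]
    (π : K →+ C)
    (σ : R →+* R) (hσ : ∀ r, σ (σ r) = r)
    (χ : K → R)
    (hD1 : ∀ k, Associated (σ (χ k)) (χ k))
    (hD2 : ∀ k k', Associated (χ (k + k')) (χ k * χ k'))
    (hL : LeftPD σ (Set.univ : Set C) (DeltaSet π χ) (Cprim σ π χ))
    (hR : RightPD σ (Set.univ : Set C) (DeltaSet π χ) (Cco π χ))
    (l : R) (hl : Irreducible l) :
    (∀ c ∈ Cprim σ π χ l ∩ Cco π χ l, c ∈ DeltaSet π χ) ∧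
    (∀ c : C, ∃ d ∈ Cprim σ π χ l, c - d ∈ Cco π χ l) :=
  ⟨fun _ hc => mem_deltaSet_of_mem_cprim_inter_cco hσ hD1 hR hl hc,
    exists_mem_cprim_sub_mem_cco hσ hD2 hL hl⟩

/-- If `C` is both left and right primary decomposable, then for every irreducible `λ`
the natural map `C_λ/Δ → C/C^λ` is an isomorphism: (a) injectivity (every element of
`C_λ ∩ C^λ` lies in `Δ`) and (b) surjectivity (every `c` is congruent mod `C^λ` to an
element of `C_λ`). -/
theorem statement8
    {K C R : Type*} [AddCommMonoid K] [AddCommGroup C]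
    [CommRing R] [IsDomain R] [UniqueFactorizationMonoid R]
    (π : K →+ C) (hπ : Function.Surjective π)
    (σ : R →+* R) (hσ : ∀ r, σ (σ r) = r)
    (χ : K → R) (hχ : ∀ k, χ k ≠ 0)
    (hD1 : ∀ k, Associated (σ (χ k)) (χ k))
    (hD2 : ∀ k k', Associated (χ (k + k')) (χ k * χ k'))
    (hD3 : ∀ k, ∃ j, π j = -π k ∧ Associated (χ j) (χ k))
    (hL : LeftPD σ (Set.univ : Set C) (DeltaSet π χ) (Cprim σ π χ))
    (hR : RightPD σ (Set.univ : Set C) (DeltaSet π χ) (Cco π χ))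
    (l : R) (hl : Irreducible l) :
    (∀ c ∈ Cprim σ π χ l ∩ Cco π χ l, c ∈ DeltaSet π χ) ∧
    (∀ c : C, ∃ d ∈ Cprim σ π χ l, c - d ∈ Cco π χ l) :=
  statement8_general π σ hσ χ hD1 hD2 hL hR l hl
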